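/- For every n ≥ 3, X̃_n(3,1) = (1/144)·(n−2)(n−3)(n−4)(9n³−44n²+49n−6)·(n−3)!; as an integer identity, 144·X̃_n(3,1) = (n−2)·(n−3)·(n−4)·(9n³−44n²+49n−6)·(n−3)!. -/

import Mathlib

/-!
Writing `X̃_n(h, p) = X_n(n + 1 + h, p)`, the recurrence becomes
`X̃_n(h, p) = (n - h)(X̃_{n-1}(h - 1, p) + X̃_{n-1}(h, p)) + 2h X̃_{n-1}(h, p - 1)`,
and `X̃` vanishes for `h < 0` or `p < 0`. For fixed `(h, p)` this is a first-order recurrence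
in `n` whose inhomogeneous part only involves entries with smaller `h` or `p`, so closed forms for
`(h, p) = (0, 0), (0, p ≠ 0), (1, 0), (1, 1), (2, 0), (2, 1), (3, 0), (3, 1)` follow in turn
by induction on `n`.
-/

/-- Refined counting numbers `Xtab n h p`: `Xtab 1 2 0 = 1`, zero off `(2,0)` at `n = 1`, and
`Xtab n h p = (2n+1-h)·(Xtab (n-1) (h-2) p + Xtab (n-1) (h-1) p) + 2(h-1-n)·Xtab (n-1) (h-1) (p-1)`
for `n ≥ 2`.  `Xtab n h p` counts generalized tree-like tableaux of size `n`, half-perimeter `h`,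
with exactly `p` off-diagonal points attached to a diagonal point. -/
def Xtab : ℕ → ℤ → ℤ → ℤ
  | 0, _, _ => 0
  | 1, h, p => if h = 2 ∧ p = 0 then 1 else 0
  | n + 2, h, p =>
      (2 * ((n : ℤ) + 2) + 1 - h) * (Xtab (n + 1) (h - 2) p + Xtab (n + 1) (h - 1) p)
        + 2 * (h - 1 - ((n : ℤ) + 2)) * Xtab (n + 1) (h - 1) (p - 1)

open Nat

theorem Xtab_eq_zero_of_neg : ∀ (n : ℕ) {h p : ℤ}, p < 0 → Xtab n h p = 0
  | 0, _, _, _ => rfl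
  | 1, h, p, hp => by
    have : ¬(h = 2 ∧ p = 0) := by omega
    simp [Xtab, this]
  | n + 2, h, p, hp => by
    rw [Xtab, Xtab_eq_zero_of_neg _ hp, Xtab_eq_zero_of_neg _ hp,
      Xtab_eq_zero_of_neg _ (by omega : p - 1 < 0)]
    ring

theorem Xtab_eq_zero_of_le : ∀ (n : ℕ) {h p : ℤ}, h ≤ n → Xtab n h p = 0
  | 0, _, _, _ => rfl
  | 1, h, p, hh => by
    have : ¬(h = 2 ∧ p = 0) := by omega
    simp [Xtab, this]
  | n + 2, h, p, hh => by
    push_cast at hh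
    rw [Xtab, Xtab_eq_zero_of_le _ (by push_cast; omega),
      Xtab_eq_zero_of_le _ (by push_cast; omega), Xtab_eq_zero_of_le _ (by push_cast; omega)]
    ring

def Xtilde (n : ℕ) (h p : ℤ) : ℤ := Xtab n (n + 1 + h) p

theorem Xtilde_eq_zero_of_neg (n : ℕ) (h : ℤ) {p : ℤ} (hp : p < 0) : Xtilde n h p = 0 :=
  Xtab_eq_zero_of_neg n hp

theorem Xtilde_eq_zero_of_neg_height (n : ℕ) {h : ℤ} (p : ℤ) (hh : h < 0) :
    Xtilde n h p = 0 :=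
  Xtab_eq_zero_of_le n (by omega)

theorem Xtilde_add_two (n : ℕ) (h p : ℤ) :
    Xtilde (n + 2) h p = ((n : ℤ) + 2 - h) * (Xtilde (n + 1) (h - 1) p + Xtilde (n + 1) h p)
      + 2 * h * Xtilde (n + 1) h (p - 1) := by
  simp only [Xtilde, Xtab]
  push_cast
  ring_nf

theorem Xtilde_zero_zero (n : ℕ) : Xtilde (n + 1) 0 0 = (n + 1)! := by
  induction n with
  | zero => decide
  | succ n ih =>
    rw [Xtilde_add_two, ih, Xtilde_eq_zero_of_neg_height _ _ (by norm_num),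
      Nat.factorial_succ (n + 1)]
    push_cast
    ring

theorem Xtilde_zero_of_ne_zero (n : ℕ) {p : ℤ} (hp : p ≠ 0) : Xtilde n 0 p = 0 := by
  induction n with
  | zero => rfl
  | succ n ih =>
    cases n with
    | zero => simp [Xtilde, Xtab, hp]
    | succ n => rw [Xtilde_add_two, ih, Xtilde_eq_zero_of_neg_height _ _ (by norm_num)]; ring

theorem Xtilde_one_zero (n : ℕ) : 2 * Xtilde (n + 1) 1 0 = n * (n + 1)! := by
  induction n with
  | zero => decide
  | succ n ih =>
    rw [Xtilde_add_two]
    norm_num [Xtilde_zero_zero, Xtilde_eq_zero_of_neg]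
    push_cast [Nat.factorial_succ] at ih ⊢
    linear_combination (n + 1 : ℤ) * ih

theorem Xtilde_one_one (n : ℕ) : 2 * Xtilde (n + 1) 1 1 = n * (n - 1) * n ! := by
  induction n with
  | zero => decide
  | succ n ih =>
    have h10 := Xtilde_one_zero n
    rw [Xtilde_add_two]
    norm_num [Xtilde_zero_of_ne_zero]
    push_cast [Nat.factorial_succ] at h10 ⊢
    linear_combination (n + 1 : ℤ) * ih + 2 * h10

theorem Xtilde_two_zero (n : ℕ) : 24 * Xtilde (n + 2) 2 0 = n * (3 * n + 1) * (n + 2)! := by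
  induction n with
  | zero => decide
  | succ n ih =>
    have h10 := Xtilde_one_zero (n + 1)
    rw [Xtilde_add_two]
    norm_num [Xtilde_eq_zero_of_neg]
    push_cast [Nat.factorial_succ] at ih h10 ⊢
    linear_combination (n + 1 : ℤ) * ih + 12 * (n + 1 : ℤ) * h10

theorem Xtilde_two_one (n : ℕ) :
    36 * Xtilde (n + 3) 2 1 = n * (n + 1) ^ 2 * (9 * n ^ 2 + 35 * n + 28) * n ! := by
  induction n with
  | zero => decide
  | succ n ih =>
    have h11 := Xtilde_one_one (n + 2)
    have h20 := Xtilde_two_zero (n + 1)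
    rw [Xtilde_add_two]
    norm_num
    push_cast [Nat.factorial_succ] at ih h11 h20 ⊢
    linear_combination (n + 2 : ℤ) * ih + 18 * (n + 2 : ℤ) * h11 + 6 * h20

theorem Xtilde_three_zero (n : ℕ) : 48 * Xtilde (n + 3) 3 0 = (n + 1) * n ^ 2 * (n + 3)! := by
  induction n with
  | zero => decide
  | succ n ih =>
    have h20 := Xtilde_two_zero (n + 1)
    rw [Xtilde_add_two]
    norm_num [Xtilde_eq_zero_of_neg]
    push_cast [Nat.factorial_succ] at ih h20 ⊢
    linear_combination (n + 1 : ℤ) * ih + 2 * (n + 1 : ℤ) * h20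

theorem Xtilde_three_one (n : ℕ) :
    144 * Xtilde (n + 3) 3 1
      = (n + 1) * n * (n - 1) * (9 * n ^ 3 + 37 * n ^ 2 + 28 * n - 12) * n ! := by
  induction n with
  | zero => decide
  | succ n ih =>
    have h21 := Xtilde_two_one n
    have h30 := Xtilde_three_zero n
    rw [Xtilde_add_two]
    norm_num
    push_cast [Nat.factorial_succ] at ih h21 h30 ⊢
    linear_combination (n + 1 : ℤ) * ih + 4 * (n + 1 : ℤ) * h21 + 18 * h30

/-- For every n ≥ 3, 144·X̃_n(3,1) = (n−2)·(n−3)·(n−4)·(9n³−44n²+49n−6)·(n−3)!,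
where X̃_n(3,1) := X_n(n+4, 1). -/
theorem stmt17 (n : ℕ) (hn : 3 ≤ n) :
    144 * Xtab n ((n : ℤ) + 4) 1
      = ((n : ℤ) - 2) * ((n : ℤ) - 3) * ((n : ℤ) - 4)
          * (9 * (n : ℤ) ^ 3 - 44 * (n : ℤ) ^ 2 + 49 * (n : ℤ) - 6)
          * (Nat.factorial (n - 3) : ℤ) := by
  obtain ⟨n, rfl⟩ := Nat.exists_eq_add_of_le' hn
  rw [show ((n + 3 : ℕ) : ℤ) + 4 = (n + 3 : ℕ) + 1 + 3 by ring, Nat.add_sub_cancel]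
  change 144 * Xtilde (n + 3) 3 1 = _
  rw [Xtilde_three_one]
  push_cast
  ring
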